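/- Let q be a normalized central configuration in the plane with n bodies, let R = |q_{i0}| = max_i |q_i|, and let M = Σ_i m_i. Then for every ε ∈ (0, R/(n−1)) we have R − (n−2)ε < M / ε². -/

import Mathlib

/-!
Let `R = ‖q i₀‖`. Sort the other `n - 1` bodies into the annuli `kε ≤ ‖q j - q i₀‖ < (k + 1)ε`,
`k < n - 1`. Either every annulus is occupied, and then all bodies lie within `(n - 1)ε < R` of
`q i₀`, or some annulus is empty, and the bodies inside it form a cluster `C ∋ i₀` of radius at most
`(n - 2)ε` at distance at least `ε` from all other bodies. Summing the central configuration
equations over a cluster `C` of radius `d`, the internal forces cancel; pairing what is left with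
`q i₀` gives `R (R - d) ∑_C m ≤ ∑_C m · ∑_{Cᶜ} m · R / ε²`. For `C` the whole configuration this
contradicts `d < R`; otherwise it is the estimate, strict because `m i₀` is missing from `∑_{Cᶜ} m`.
-/

open Finset RealInnerProductSpace

variable {ι E : Type*} [NormedAddCommGroup E] [InnerProductSpace ℝ E]

theorem Finset.sum_sum_eq_zero_of_antisymm {M : Type*} [AddCommGroup M] [IsAddTorsionFree M]
    (s : Finset ι) {f : ι → ι → M} (hf : ∀ i j, f j i = -f i j) :
    ∑ i ∈ s, ∑ j ∈ s, f i j = 0 := by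
  refine self_eq_neg.mp ?_
  calc ∑ i ∈ s, ∑ j ∈ s, f i j = ∑ j ∈ s, ∑ i ∈ s, -f j i := by
        rw [sum_comm]
        exact sum_congr rfl fun j _ => sum_congr rfl fun i _ => hf j i
    _ = -∑ i ∈ s, ∑ j ∈ s, f i j := by simp only [sum_neg_distrib]

theorem norm_mul_sub_le_real_inner {x y : E} {d : ℝ} (h : ‖y - x‖ ≤ d) :
    ‖x‖ * (‖x‖ - d) ≤ ⟪x, y⟫ := by
  have hcs : -(‖x‖ * ‖y - x‖) ≤ ⟪x, y - x⟫ := neg_le_of_abs_le (abs_real_inner_le_norm x (y - x))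
  rw [inner_sub_right, real_inner_self_eq_norm_mul_norm] at hcs
  nlinarith [norm_nonneg x]

theorem real_inner_smul_div_norm_pow_three_le (x : E) {v : E} {c ε : ℝ} (hc : 0 ≤ c)
    (hε : 0 < ε) (hv : ε ≤ ‖v‖) : ⟪x, (c / ‖v‖ ^ 3) • v⟫ ≤ c * (‖x‖ / ε ^ 2) := by
  have hv0 : 0 < ‖v‖ := hε.trans_le hv
  calc ⟪x, (c / ‖v‖ ^ 3) • v⟫ = c / ‖v‖ ^ 3 * ⟪x, v⟫ := real_inner_smul_right _ _ _
    _ ≤ c / ‖v‖ ^ 3 * (‖x‖ * ‖v‖) := by gcongr; exact real_inner_le_norm x v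
    _ = c * (‖x‖ / ‖v‖ ^ 2) := by field_simp
    _ ≤ c * (‖x‖ / ε ^ 2) := by gcongr

theorem exists_gap_or_forall_lt (s : Finset ι) (ρ : ι → ℝ) {ε : ℝ} (hε : 0 < ε) :
    (∀ j ∈ s, ρ j < #s * ε) ∨ ∃ k < #s, ∀ j ∈ s, ρ j ∉ Set.Ico (k * ε) ((k + 1) * ε) := by
  refine or_iff_not_imp_right.mpr fun h => ?_
  push Not at h
  choose f hfs hfρ using h
  have hle : ∀ k l (hk : k < #s) (hl : l < #s), f k hk = f l hl → k ≤ l := fun k l hk hl hkl => by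
    have := (hfρ k hk).1.trans_lt (hkl ▸ (hfρ l hl).2)
    exact Nat.lt_succ_iff.mp (by exact_mod_cast lt_of_mul_lt_mul_right this hε.le)
  intro j hj
  obtain ⟨k, hk, rfl⟩ := surj_on_of_inj_on_of_card_le (s := range #s)
    (fun k hk => f k (mem_range.mp hk)) (fun k _ => hfs k _)
    (fun k l hk hl hkl => le_antisymm (hle k l _ _ hkl) (hle l k _ _ hkl.symm))
    (card_range _).ge j hj
  calc ρ (f k _) < (k + 1) * ε := (hfρ k _).2
    _ ≤ #s * ε := by gcongr; exact_mod_cast mem_range.mp hk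

theorem exists_isolated_cluster_or_forall_dist_le {α : Type*} [PseudoMetricSpace α] [Fintype ι]
    [DecidableEq ι] (q : ι → α) (i₀ : ι) {ε : ℝ} (hε : 0 < ε) :
    (∀ i, dist (q i) (q i₀) ≤ (Fintype.card ι - 1) * ε) ∨
      ∃ C : Finset ι, i₀ ∈ C ∧ (∀ i ∈ C, dist (q i) (q i₀) ≤ (Fintype.card ι - 2) * ε) ∧
        ∀ i ∈ C, ∀ j ∉ C, ε ≤ dist (q i) (q j) := by
  have hcard : (#(univ.erase i₀) : ℝ) = Fintype.card ι - 1 := by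
    rw [card_erase_of_mem (mem_univ _), card_univ, Nat.cast_pred (Fintype.card_pos_iff.mpr ⟨i₀⟩)]
  obtain hclose | ⟨k, hk, hgap⟩ :=
    exists_gap_or_forall_lt (univ.erase i₀) (fun j => dist (q j) (q i₀)) hε
  · left
    intro i
    rcases eq_or_ne i i₀ with rfl | hi
    · rw [dist_self, ← hcard]; positivity
    · exact hcard ▸ (hclose i (mem_erase.mpr ⟨hi, mem_univ i⟩)).le
  right
  have hk : (k : ℝ) ≤ Fintype.card ι - 2 := by
    have : ((k + 1 : ℕ) : ℝ) ≤ #(univ.erase i₀) := by exact_mod_cast hk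
    push_cast at this; linarith
  set C := univ.filter fun i => dist (q i) (q i₀) ≤ k * ε
  have hi₀ : i₀ ∈ C := mem_filter.mpr ⟨mem_univ _, by rw [dist_self]; positivity⟩
  refine ⟨C, hi₀, fun i hi => (mem_filter.mp hi).2.trans (by gcongr), fun i hi j hj => ?_⟩
  have hj' : k * ε < dist (q j) (q i₀) :=
    lt_of_not_ge fun h => hj (mem_filter.mpr ⟨mem_univ _, h⟩)
  have hfar : (k + 1) * ε ≤ dist (q j) (q i₀) := by
    by_contra! h
    exact hgap j (mem_erase.mpr ⟨by rintro rfl; exact hj hi₀, mem_univ _⟩) ⟨hj'.le, h⟩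
  linarith [dist_triangle (q j) (q i) (q i₀), dist_comm (q i) (q j), (mem_filter.mp hi).2]

def IsNormalizedCentralConfig [Fintype ι] [DecidableEq ι] (m : ι → ℝ) (q : ι → E) : Prop :=
  ∀ i, q i = ∑ j ∈ univ \ {i}, (m j / ‖q i - q j‖ ^ 3) • (q i - q j)

/-- Minus the Newtonian force exerted on body `i` by body `j`. -/
noncomputable def pairForce (m : ι → ℝ) (q : ι → E) (i j : ι) : E :=
  (m i * m j / ‖q i - q j‖ ^ 3) • (q i - q j)

theorem pairForce_swap (m : ι → ℝ) (q : ι → E) (i j : ι) :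
    pairForce m q j i = -pairForce m q i j := by
  rw [pairForce, pairForce, norm_sub_rev, mul_comm (m j), ← smul_neg, neg_sub]

theorem pairForce_self (m : ι → ℝ) (q : ι → E) (i : ι) : pairForce m q i i = 0 := by
  simp [pairForce]

namespace IsNormalizedCentralConfig

variable [Fintype ι] [DecidableEq ι] {m : ι → ℝ} {q : ι → E}

theorem smul_eq_sum_pairForce (hq : IsNormalizedCentralConfig m q) (i : ι) :
    m i • q i = ∑ j, pairForce m q i j := by
  rw [← sum_erase _ (pairForce_self m q i), ← sdiff_singleton_eq_erase, hq i,
    smul_sum]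
  refine sum_congr rfl fun j _ => ?_
  rw [pairForce, smul_smul, mul_div_assoc]

theorem sum_smul_eq_sum_sum_compl (hq : IsNormalizedCentralConfig m q) (C : Finset ι) :
    ∑ i ∈ C, m i • q i = ∑ i ∈ C, ∑ j ∈ Cᶜ, pairForce m q i j := by
  have := IsAddTorsionFree.of_isTorsionFree ℝ E
  simp only [hq.smul_eq_sum_pairForce, ← sum_add_sum_compl C, sum_add_distrib,
    C.sum_sum_eq_zero_of_antisymm (pairForce_swap m q), zero_add]

theorem norm_sub_le_of_isolated_cluster (hq : IsNormalizedCentralConfig m q) (hm : ∀ i, 0 < m i)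
    {C : Finset ι} {i₀ : ι} (hi₀ : i₀ ∈ C) (hq₀ : q i₀ ≠ 0) {d ε : ℝ} (hε : 0 < ε)
    (hnear : ∀ i ∈ C, ‖q i - q i₀‖ ≤ d) (hsep : ∀ i ∈ C, ∀ j ∉ C, ε ≤ ‖q i - q j‖) :
    ‖q i₀‖ - d ≤ (∑ j ∈ Cᶜ, m j) / ε ^ 2 := by
  set x := q i₀
  have hA : 0 < ∑ i ∈ C, m i := sum_pos (fun i _ => hm i) ⟨i₀, hi₀⟩
  have hlower : (∑ i ∈ C, m i) * (‖x‖ * (‖x‖ - d)) ≤ ⟪x, ∑ i ∈ C, m i • q i⟫ := by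
    rw [inner_sum, sum_mul]
    refine sum_le_sum fun i hi => ?_
    rw [real_inner_smul_right]
    exact mul_le_mul_of_nonneg_left (norm_mul_sub_le_real_inner (hnear i hi)) (hm i).le
  have hupper : ⟪x, ∑ i ∈ C, m i • q i⟫ ≤
      (∑ i ∈ C, m i) * ((∑ j ∈ Cᶜ, m j) * (‖x‖ / ε ^ 2)) := by
    rw [hq.sum_smul_eq_sum_sum_compl, inner_sum, sum_mul]
    refine sum_le_sum fun i hi => ?_
    rw [inner_sum, sum_mul, mul_sum]
    refine sum_le_sum fun j hj => ?_
    rw [← mul_assoc]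
    exact real_inner_smul_div_norm_pow_three_le x (mul_pos (hm i) (hm j)).le hε
      (hsep i hi j (mem_compl.mp hj))
  have hx : 0 < ‖x‖ := norm_pos_iff.mpr hq₀
  have := (mul_le_mul_iff_right₀ hA).mp (hlower.trans hupper)
  rw [mul_div_left_comm] at this
  exact (mul_le_mul_iff_right₀ hx).mp this

end IsNormalizedCentralConfig

theorem centralConfig_cluster_size_estimate_general
    (n : ℕ)
    (q : Fin n → EuclideanSpace ℝ (Fin 2)) (m : Fin n → ℝ) (R : ℝ) (i0 : Fin n)
    (hm : ∀ i, 0 < m i)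
    (hcc : ∀ i, q i = ∑ j ∈ Finset.univ \ {i},
      (m j / ‖q i - q j‖ ^ 3) • (q i - q j))
    (hR : R = ‖q i0‖) :
    ∀ ε : ℝ, 0 < ε → ε < R / ((n : ℝ) - 1) →
      R - ((n : ℝ) - 2) * ε < (∑ i, m i) / ε ^ 2 := by
  intro ε hε hεR
  have hn : (1 : ℝ) ≤ n := by exact_mod_cast i0.pos
  have hεR' : ((n : ℝ) - 1) * ε < R := by
    rcases hn.eq_or_lt with hn1 | hn1
    · rw [← hn1, sub_self, div_zero] at hεR
      linarith
    · rw [lt_div_iff₀ (by linarith)] at hεR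
      linarith
  have hq₀ : q i0 ≠ 0 := norm_pos_iff.mp (hR ▸ by nlinarith)
  have hccn : IsNormalizedCentralConfig m q := hcc
  obtain hclose | ⟨C, hi₀, hnear, hsep⟩ := exists_isolated_cluster_or_forall_dist_le q i0 hε
  · have := hccn.norm_sub_le_of_isolated_cluster hm (mem_univ i0) hq₀ hε
      (fun i _ => by simpa [dist_eq_norm] using hclose i) (fun i _ j hj => absurd (mem_univ j) hj)
    simp only [compl_univ, sum_empty, zero_div] at this
    linarith
  · have hout : ∑ j ∈ Cᶜ, m j < ∑ i, m i :=
      sum_lt_sum_of_subset (subset_univ _) (mem_univ i0) (by simpa using hi₀) (hm i0)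
        (fun j _ _ => (hm j).le)
    calc R - ((n : ℝ) - 2) * ε ≤ (∑ j ∈ Cᶜ, m j) / ε ^ 2 :=
          hR ▸ hccn.norm_sub_le_of_isolated_cluster hm hi₀ hq₀ hε
            (fun i hi => by simpa [dist_eq_norm] using hnear i hi)
            (fun i hi j hj => by simpa [dist_eq_norm] using hsep i hi j hj)
      _ < (∑ i, m i) / ε ^ 2 := by gcongr

theorem centralConfig_cluster_size_estimate
    (n : ℕ) (hn : 3 ≤ n)
    (q : Fin n → EuclideanSpace ℝ (Fin 2)) (m : Fin n → ℝ) (R : ℝ) (i0 : Fin n)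
    (hm : ∀ i, 0 < m i)
    (hq : ∀ i j, i ≠ j → q i ≠ q j)
    (hcc : ∀ i, q i = ∑ j ∈ Finset.univ \ {i},
      (m j / ‖q i - q j‖ ^ 3) • (q i - q j))
    (hR : R = ‖q i0‖)
    (hmax : ∀ i, ‖q i‖ ≤ R) :
    ∀ ε : ℝ, 0 < ε → ε < R / ((n : ℝ) - 1) →
      R - ((n : ℝ) - 2) * ε < (∑ i, m i) / ε ^ 2 :=
  centralConfig_cluster_size_estimate_general n q m R i0 hm hcc hR
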